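/- For every integer k ≥ 1 and every real x ≥ 2^k, s_k(x) ≤ Σ_{m=1}^{M(x,k)} π((x/m)^{1/k}), where π denotes the prime counting function. -/
import Mathlib

noncomputable section

/-- The j-th prime, with `nthPrime 1 = 2`, `nthPrime 2 = 3`, ... -/
def nthPrime (j : ℕ) : ℕ := Nat.nth Nat.Prime (j - 1)

/-- The chain sum `p_b^k + p_{b+1}^k + ... + p_t^k`. -/
def chainSum (k b t : ℕ) : ℕ := ∑ j ∈ Finset.Icc b t, nthPrime j ^ k

/-- `sk k x` is the total number of k-gleeful representations of integers ≤ x,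
i.e. the number of pairs `1 ≤ b ≤ t` with `p_b^k + ... + p_t^k ≤ x`. -/
def sk (k : ℕ) (x : ℝ) : ℕ :=
  Set.ncard {bt : ℕ × ℕ | 1 ≤ bt.1 ∧ bt.1 ≤ bt.2 ∧ (chainSum k bt.1 bt.2 : ℝ) ≤ x}

/-- `skm k m x` is the number of indices `n ≥ 1` with
`p_n^k + p_{n+1}^k + ... + p_{n+m-1}^k ≤ x`. -/
def skm (k m : ℕ) (x : ℝ) : ℕ :=
  Set.ncard {b : ℕ | 1 ≤ b ∧ (chainSum k b (b + m - 1) : ℝ) ≤ x}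

/-- The prefix sum `p_1^k + ... + p_M^k`. -/
def prefixSum (k M : ℕ) : ℕ := ∑ j ∈ Finset.Icc 1 M, nthPrime j ^ k

/-- The prime counting function: the number of primes ≤ t. -/
def primePi (t : ℝ) : ℕ := Set.ncard {p : ℕ | p.Prime ∧ (p : ℝ) ≤ t}

/-- `fkm k m n` is the number of indices `b ≥ 1` with
`n = p_b^k + p_{b+1}^k + ... + p_{b+m-1}^k`. -/
def fkm (k m n : ℕ) : ℕ :=
  Set.ncard {b : ℕ | 1 ≤ b ∧ n = chainSum k b (b + m - 1)}

def A (y : ℝ) : ℝ := Real.log (y / 2) / Real.log y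

def B (y : ℝ) (k : ℕ) : ℝ :=
  Real.log (y + 1) / Real.log y +
    Real.log ((Real.log (y + 1)) ^ 2) / Real.log y * ((k : ℝ) / ((k : ℝ) + 1))

def C (y : ℝ) (k : ℕ) : ℝ :=
  (y / (y - 1)) ^ ((1 : ℝ) / ((k : ℝ) + 1)) * B y k ^ ((k : ℝ) / ((k : ℝ) + 1))

def D (y : ℝ) (k : ℕ) : ℝ :=
  (y / (y + 3)) *
    (Real.log (y / 2) / (Real.log y + 2 * Real.log (Real.log (y + 2)))) ^
      ((k : ℝ) / ((k : ℝ) + 1))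

def E (y : ℝ) (k : ℕ) : ℝ := 1 + 1 / (((k : ℝ) + 1) * A y - 1)

def F (y : ℝ) (k : ℕ) : ℝ :=
  ((y + 1) / y) ^ (((k : ℝ) - 1) / (k : ℝ)) *
    (4 : ℝ) ^ (((k : ℝ) - 1) / ((k : ℝ) * ((k : ℝ) + 1))) *
    C y k ^ (((k : ℝ) - 1) / (k : ℝ)) * E y k

def U (y : ℝ) (k : ℕ) : ℝ := 1.25506 * F y k

def L (y : ℝ) (k : ℕ) : ℝ := ((y - 1) / y) * D y k ^ 2

def ck (k : ℕ) : ℝ :=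
  ((k : ℝ) ^ 2 / ((k : ℝ) - 1)) * ((k : ℝ) + 1) ^ (((k : ℝ) - 1) / (k : ℝ))

lemma nthPrime_prime (j : ℕ) : (nthPrime j).Prime := Nat.prime_nth_prime _

lemma nthPrime_mono : Monotone nthPrime := fun _ _ h =>
  (Nat.nth_le_nth Nat.infinite_setOf_prime).2 (Nat.sub_le_sub_right h 1)

lemma nthPrime_injOn : Set.InjOn nthPrime (Set.Ici 1) := by
  intro a ha b hb h
  have := Nat.nth_injective Nat.infinite_setOf_prime h
  simp only [Set.mem_Ici] at ha hb
  omega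

lemma prefixSum_mono (k : ℕ) : Monotone (prefixSum k) := fun _ _ h =>
  Finset.sum_le_sum_of_subset (Finset.Icc_subset_Icc_right h)

lemma mul_le_chainSum (k b t : ℕ) : (t + 1 - b) * nthPrime b ^ k ≤ chainSum k b t := by
  calc (t + 1 - b) * nthPrime b ^ k = (Finset.Icc b t).card • (nthPrime b ^ k) := by
        rw [Nat.card_Icc, smul_eq_mul]
    _ ≤ chainSum k b t := Finset.card_nsmul_le_sum _ _ _ (fun j hj =>
        Nat.pow_le_pow_left (nthPrime_mono (Finset.mem_Icc.1 hj).1) k)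

lemma prefixSum_le_chainSum (k b t : ℕ) (hb : 1 ≤ b) :
    prefixSum k (t + 1 - b) ≤ chainSum k b t := by
  rw [prefixSum, chainSum,
    show Finset.Icc b t =
        Finset.map ⟨fun i => i + (b - 1), add_left_injective _⟩ (Finset.Icc 1 (t + 1 - b)) by
      ext j
      simp only [Finset.mem_map, Finset.mem_Icc, Function.Embedding.coeFn_mk]
      constructor
      · intro h; exact ⟨j + 1 - b, by omega, by omega⟩
      · rintro ⟨i, hi, rfl⟩; omega]
  rw [Finset.sum_map]
  exact Finset.sum_le_sum fun i _ =>
    Nat.pow_le_pow_left (nthPrime_mono (Nat.le_add_right _ _)) k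

theorem sk_le_sum_pi (k : ℕ) (hk : 1 ≤ k) (x : ℝ) (hx : (2 : ℝ) ^ k ≤ x)
    (M : ℕ)
    (hM1 : (prefixSum k M : ℝ) ≤ x) (hM2 : x < (prefixSum k (M + 1) : ℝ)) :
    sk k x ≤ ∑ m ∈ Finset.Icc 1 M, primePi ((x / (m : ℝ)) ^ ((1 : ℝ) / (k : ℝ))) := by
  classical
  have hk0 : (k : ℝ) ≠ 0 := Nat.cast_ne_zero.2 (by omega)
  set S := {bt : ℕ × ℕ | 1 ≤ bt.1 ∧ bt.1 ≤ bt.2 ∧ (chainSum k bt.1 bt.2 : ℝ) ≤ x} with hS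
  set bnd : ℕ → ℝ := fun m => (x / (m : ℝ)) ^ ((1 : ℝ) / (k : ℝ)) with hbnd
  set P : ℕ → Finset ℕ := fun m =>
    (Finset.range (⌊bnd m⌋₊ + 1)).filter (fun p => p.Prime ∧ (p : ℝ) ≤ bnd m) with hPdef
  have hP : ∀ m, primePi (bnd m) = (P m).card := by
    intro m
    rw [primePi, ← Set.ncard_coe_finset]
    congr 1
    ext p
    simp only [hPdef, Finset.coe_filter, Finset.mem_range, Set.mem_setOf_eq, Nat.lt_succ_iff]
    exact ⟨fun ⟨hp, hle⟩ => ⟨Nat.le_floor hle, hp, hle⟩, fun ⟨_, h⟩ => h⟩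
  set T : Finset (ℕ × ℕ) :=
    (Finset.Icc 1 M).biUnion (fun m => (P m).image (fun p => (m, p))) with hT
  set f : ℕ × ℕ → ℕ × ℕ := fun bt => (bt.2 + 1 - bt.1, nthPrime bt.1) with hf
  have hinj : Set.InjOn f S := by
    rintro ⟨b, t⟩ ⟨hb, hbt, -⟩ ⟨b', t'⟩ ⟨hb', hbt', -⟩ heq
    simp only [hf, Prod.mk.injEq] at heq
    have hbb : b = b' := nthPrime_injOn hb hb' heq.2
    have h1 := heq.1
    have h2 : b ≤ t := hbt
    have h3 : b' ≤ t' := hbt'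
    subst hbb
    exact Prod.ext rfl (by omega)
  have hsub : f '' S ⊆ ↑T := by
    rintro ⟨m, p⟩ ⟨⟨b, t⟩, ⟨hb, hbt, hle⟩, heq⟩
    simp only [hf, Prod.mk.injEq] at heq
    obtain ⟨rfl, rfl⟩ := heq
    set m := t + 1 - b with hm
    have hm1 : 1 ≤ m := by omega
    -- m ≤ M
    have hmM : m ≤ M := by
      by_contra h
      have h1 : prefixSum k (M + 1) ≤ chainSum k b t :=
        le_trans (prefixSum_mono k (by omega)) (prefixSum_le_chainSum k b t hb)
      have : (prefixSum k (M + 1) : ℝ) ≤ x := le_trans (Nat.cast_le.2 h1) hle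
      linarith
    -- the real bound on nthPrime b
    have hmulR : (m : ℝ) * (nthPrime b : ℝ) ^ k ≤ x := by
      have := mul_le_chainSum k b t
      calc (m : ℝ) * (nthPrime b : ℝ) ^ k = ((m * nthPrime b ^ k : ℕ) : ℝ) := by
            push_cast; ring
        _ ≤ (chainSum k b t : ℝ) := Nat.cast_le.2 this
        _ ≤ x := hle
    have hm0 : (0 : ℝ) < (m : ℝ) := by exact_mod_cast hm1
    have hpk : ((nthPrime b : ℝ)) ^ k ≤ x / (m : ℝ) := by
      rw [le_div_iff₀ hm0]; linarith [hmulR]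
    have hple : (nthPrime b : ℝ) ≤ bnd m := by
      have hp0 : (0 : ℝ) ≤ (nthPrime b : ℝ) := Nat.cast_nonneg _
      have key : (nthPrime b : ℝ) = (((nthPrime b : ℝ)) ^ k) ^ ((1 : ℝ) / (k : ℝ)) := by
        rw [← Real.rpow_natCast (nthPrime b : ℝ) k, ← Real.rpow_mul hp0,
          mul_one_div, div_self hk0, Real.rpow_one]
      rw [key, hbnd]
      exact Real.rpow_le_rpow (by positivity) hpk (by positivity)
    simp only [hT, Finset.coe_biUnion, Set.mem_iUnion, Finset.mem_coe, Finset.mem_image,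
      Finset.mem_Icc]
    refine ⟨m, by simpa using And.intro hm1 hmM, nthPrime b, ?_, rfl⟩
    simp only [hPdef, Finset.mem_filter, Finset.mem_range, Nat.lt_succ_iff]
    exact ⟨Nat.le_floor hple, nthPrime_prime b, hple⟩
  have hcard : T.card = ∑ m ∈ Finset.Icc 1 M, (P m).card := by
    rw [hT, Finset.card_biUnion]
    · exact Finset.sum_congr rfl fun m _ =>
        Finset.card_image_of_injective _ (fun a b h => by simpa using h)
    · intro m₁ _ m₂ _ hne
      simp only [Finset.disjoint_left, Finset.mem_image]
      rintro xy ⟨p, _, rfl⟩ ⟨q, _, hq⟩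
      injection hq with h1 h2
      exact hne h1.symm
  calc sk k x = S.ncard := rfl
    _ = (f '' S).ncard := (Set.ncard_image_of_injOn hinj).symm
    _ ≤ (↑T : Set (ℕ × ℕ)).ncard := Set.ncard_le_ncard hsub T.finite_toSet
    _ = T.card := Set.ncard_coe_finset T
    _ = ∑ m ∈ Finset.Icc 1 M, (P m).card := hcard
    _ = ∑ m ∈ Finset.Icc 1 M, primePi (bnd m) := by
        exact Finset.sum_congr rfl fun m _ => (hP m).symm
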